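/- arXiv:1111.2817 — 3 statements merged into one kernel-verified Lean document; each statement's English description precedes it below -/
import Mathlib

section
/- For every real z > -1, the Jacobi-Stirling numbers of the second kind satisfy JS_n^{(j)}(z) = h_{n-j}(f(1),...,f(j)) where f(x) = x(x+z); that is, they are specializations of complete homogeneous symmetric functions. -/
/-- The `r`-th complete homogeneous symmetric polynomial in the variables
`x 1, …, x k`. -/
def hsymmF {R : Type*} [CommRing R] (x : ℕ → R) (k r : ℕ) : R :=
  ∑ c ∈ Finset.Nat.antidiagonalTuple k r, ∏ i : Fin k, x ((i : ℕ) + 1) ^ c i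

/-- The Jacobi-Stirling numbers of the second kind `JS z n j = JS_n^{(j)}(z)`,
defined by the recurrence `JS_n^{(j)} = JS_{n-1}^{(j-1)} + j(j+z) JS_{n-1}^{(j)}`. -/
noncomputable def JS (z : ℝ) : ℕ → ℕ → ℝ
  | 0, 0 => 1
  | 0, _ + 1 => 0
  | _ + 1, 0 => 0
  | n + 1, j + 1 =>
      JS z n j + ((j : ℝ) + 1) * (((j : ℝ) + 1) + z) * JS z n (j + 1)

lemma hsymmF_zero {R : Type*} [CommRing R] (x : ℕ → R) (k : ℕ) :
    hsymmF x k 0 = 1 := by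
  rw [hsymmF, Finset.Nat.antidiagonalTuple_zero_right, Finset.sum_singleton]
  simp

lemma hsymmF_nil {R : Type*} [CommRing R] (x : ℕ → R) (r : ℕ) :
    hsymmF x 0 (r + 1) = 0 := by
  rw [hsymmF, Finset.Nat.antidiagonalTuple_zero_succ]
  rfl

lemma hsymmF_rec {R : Type*} [CommRing R] (x : ℕ → R) (k r : ℕ) :
    hsymmF x (k + 1) (r + 1) = hsymmF x k (r + 1) + x (k + 1) * hsymmF x (k + 1) r := by
  classical
  rw [hsymmF, ← Finset.sum_filter_add_sum_filter_not _ (fun c => c (Fin.last k) = 0)]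
  congr 1
  · -- last coordinate zero
    rw [hsymmF]
    refine Finset.sum_nbij' (fun c => Fin.init c) (fun d => Fin.snoc d 0) ?_ ?_ ?_ ?_ ?_
    · intro c hc
      rw [Finset.mem_filter, Finset.Nat.mem_antidiagonalTuple] at hc
      rw [Finset.Nat.mem_antidiagonalTuple]
      rw [← hc.1, Fin.sum_univ_castSucc, hc.2, add_zero]
      rfl
    · intro d hd
      rw [Finset.Nat.mem_antidiagonalTuple] at hd
      rw [Finset.mem_filter, Finset.Nat.mem_antidiagonalTuple]
      constructor
      · rw [Fin.sum_univ_castSucc]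
        simp [hd]
      · simp
    · intro c hc
      rw [Finset.mem_filter] at hc
      funext i
      refine Fin.lastCases ?_ (fun j => ?_) i
      · simp [hc.2]
      · simp [Fin.init]
    · intro d hd
      simp
    · intro c hc
      rw [Finset.mem_filter] at hc
      rw [Fin.prod_univ_castSucc, hc.2]
      simp [Fin.init]
  · -- last coordinate positive
    rw [hsymmF, Finset.mul_sum]
    refine Finset.sum_nbij' (fun c => Function.update c (Fin.last k) (c (Fin.last k) - 1))
      (fun d => Function.update d (Fin.last k) (d (Fin.last k) + 1)) ?_ ?_ ?_ ?_ ?_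
    · intro c hc
      rw [Finset.mem_filter, Finset.Nat.mem_antidiagonalTuple] at hc
      rw [Finset.Nat.mem_antidiagonalTuple]
      have h1 : 1 ≤ c (Fin.last k) := Nat.one_le_iff_ne_zero.2 hc.2
      have := Finset.sum_update_of_mem (Finset.mem_univ (Fin.last k)) c (c (Fin.last k) - 1)
      rw [Finset.sdiff_singleton_eq_erase] at this
      rw [this]
      have h2 := Finset.add_sum_erase Finset.univ c (Finset.mem_univ (Fin.last k))
      rw [hc.1] at h2
      omega
    · intro d hd
      rw [Finset.Nat.mem_antidiagonalTuple] at hd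
      rw [Finset.mem_filter, Finset.Nat.mem_antidiagonalTuple]
      constructor
      · rw [Finset.sum_update_of_mem (Finset.mem_univ (Fin.last k)),
          Finset.sdiff_singleton_eq_erase]
        have := Finset.add_sum_erase Finset.univ d (Finset.mem_univ (Fin.last k))
        omega
      · simp
    · intro c hc
      rw [Finset.mem_filter] at hc
      have h1 : 1 ≤ c (Fin.last k) := Nat.one_le_iff_ne_zero.2 hc.2
      funext i
      rcases eq_or_ne i (Fin.last k) with rfl | hi
      · simp; omega
      · simp [Function.update_of_ne hi]
    · intro d hd
      funext i
      rcases eq_or_ne i (Fin.last k) with rfl | hi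
      · simp
      · simp [Function.update_of_ne hi]
    · intro c hc
      rw [Finset.mem_filter] at hc
      have h1 : 1 ≤ c (Fin.last k) := Nat.one_le_iff_ne_zero.2 hc.2
      rw [Fin.prod_univ_castSucc, Fin.prod_univ_castSucc]
      have hne : ∀ j : Fin k, (Fin.castSucc j) ≠ Fin.last k := fun j => (Fin.castSucc_lt_last j).ne
      simp only [Function.update_of_ne (hne _), Function.update_self]
      have hv : (Fin.last k : ℕ) + 1 = k + 1 := by simp
      rw [hv, mul_comm (x (k+1)), mul_assoc]
      congr 1
      rw [← pow_succ]
      congr 1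
      omega

lemma JS_eq_zero (z : ℝ) : ∀ n j : ℕ, n < j → JS z n j = 0 := by
  intro n
  induction n with
  | zero => intro j hj; obtain ⟨m, rfl⟩ := Nat.exists_eq_add_of_lt hj; simp [JS]
  | succ n ih =>
    intro j hj
    obtain ⟨m, rfl⟩ : ∃ m, j = m + 1 := ⟨j - 1, by omega⟩
    rw [JS, ih m (by omega), ih (m + 1) (by omega)]
    ring


theorem JS_eq_hsymm (z : ℝ) (hz : -1 < z) (n j : ℕ) (h : j ≤ n) :
    JS z n j = hsymmF (fun x : ℕ => (x : ℝ) * ((x : ℝ) + z)) j (n - j) := by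
  induction n generalizing j with
  | zero =>
    interval_cases j
    rw [hsymmF_zero]; rfl
  | succ n ih =>
    match j with
    | 0 =>
      rw [Nat.sub_zero, hsymmF_nil]
      rfl
    | m + 1 =>
      have hm : m ≤ n := by omega
      rcases eq_or_lt_of_le hm with rfl | hlt
      · rw [Nat.sub_self, hsymmF_zero, JS, JS_eq_zero z m (m + 1) (by omega),
          ih m le_rfl, Nat.sub_self, hsymmF_zero]
        ring
      · obtain ⟨r, hr⟩ : ∃ r, n - (m + 1) = r := ⟨_, rfl⟩
        have h1 : n + 1 - (m + 1) = r + 1 := by omega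
        have h2 : n - m = r + 1 := by omega
        rw [h1, hsymmF_rec, JS, ih m hm, ih (m + 1) (by omega), hr, h2]
        push_cast
        ring
end

section
/- Let f : ℕ → ℝ, and define the infinite lower/upper triangular matrices H = (H_{j,n}) with H_{j,n} = h_{n-j}(f(1),...,f(j)) and E = ((-1)^{j+n} e_{n-j}(f(1),...,f(n-1))), indexed by j,n ∈ ℕ. Then H and E are inverse matrices: for all j, n', ∑_{m} H_{j,m} · (-1)^{m+n'} e_{n'-m}(f(1),...,f(n'-1)) = δ_{j,n'}. -/
/-- The `r`-th elementary symmetric polynomial in the variables `x 1, …, x k`. -/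
def esymmF {R : Type*} [CommRing R] (x : ℕ → R) (k r : ℕ) : R :=
  ∑ s ∈ (Finset.range k).powersetCard r, ∏ i ∈ s, x (i + 1)

/-- `H f j n = h_{n-j}(f 1, …, f j)`, and `0` when `n < j`. -/
noncomputable def Hf (f : ℕ → ℝ) (j n : ℕ) : ℝ :=
  if n < j then 0 else hsymmF f j (n - j)

/-- `E f j n = e_{n-j}(f 1, …, f (n-1))`, and `0` when `n < j`. -/
noncomputable def Ef (f : ℕ → ℝ) (j n : ℕ) : ℝ :=
  if n < j then 0 else esymmF f (n - 1) (n - j)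


/-!
With `E_N(t) = ∏_{i ≤ N} (1 - x_i t)` and `H_j(t) = ∏_{i ≤ j} (1 - x_i t)⁻¹` the generating
series of the signed `e_r(x_1, …, x_N)` and of the `h_r(x_1, …, x_j)`, we have `E_j H_j = 1`, and
each further factor `1 - x_i t` of `E_N` shifts coefficients by one, so for `j ≤ N` the product
`E_N H_j = ∏_{j < i ≤ N} (1 - x_i t)` has no coefficients beyond degree `N - j`.  The `(j, n')`
entry of the matrix product is the coefficient of `t^{n' - j}` in `E_{n'-1} H_j`.
-/

open PowerSeries

namespace PowerSeries

variable {R : Type*} [CommRing R]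

theorem coeff_succ_mul_one_sub_C_mul_X (φ : R⟦X⟧) (a : R) (n : ℕ) :
    coeff (n + 1) (φ * (1 - C a * X)) = coeff (n + 1) φ - a * coeff n φ := by
  rw [mul_sub, mul_one, map_sub, ← mul_assoc, coeff_succ_mul_X, coeff_mul_C, mul_comm]

theorem mk_pow_mul_one_sub_C_mul_X (a : R) : mk (a ^ ·) * (1 - C a * X) = 1 := by
  ext (_ | n)
  · simp
  · simp [coeff_succ_mul_one_sub_C_mul_X, pow_succ']

end PowerSeries

section SymmetricSeries

variable {R : Type*} [CommRing R] (x : ℕ → R)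

def hsymmSeries (k : ℕ) : R⟦X⟧ := mk (hsymmF x k)

def esymmSeries (k : ℕ) : R⟦X⟧ := mk fun r => (-1) ^ r * esymmF x k r

theorem hsymmSeries_zero : hsymmSeries x 0 = 1 := by
  ext (_ | r) <;> simp [hsymmSeries, hsymmF, Finset.Nat.antidiagonalTuple_zero_succ]

theorem esymmSeries_zero : esymmSeries x 0 = 1 := by
  ext (_ | r)
  · simp [esymmSeries, esymmF]
  · have : (∅ : Finset ℕ).powersetCard (r + 1) = ∅ := Finset.powersetCard_eq_empty.2 (by simp)
    simp [esymmSeries, esymmF, this]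

theorem hsymmSeries_succ (k : ℕ) :
    hsymmSeries x (k + 1) = hsymmSeries x k * mk (x (k + 1) ^ ·) := by
  ext r
  simp only [hsymmSeries, coeff_mul, coeff_mk, hsymmF, Finset.sum_mul, Finset.sum_sigma']
  refine Finset.sum_nbij' (fun c => ⟨(∑ i : Fin k, c i.castSucc, c (Fin.last k)), Fin.init c⟩)
    (fun q => Fin.snoc q.2 q.1.2) ?_ ?_ (fun c _ => Fin.snoc_init_self c) ?_ ?_
  · intro c hc
    simp_all [Finset.Nat.mem_antidiagonalTuple, Fin.sum_univ_castSucc, Fin.init]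
  · rintro ⟨⟨a, b⟩, c⟩ hq
    simp_all [Finset.Nat.mem_antidiagonalTuple, Fin.sum_univ_castSucc]
  · rintro ⟨⟨a, b⟩, c⟩ hq
    simp_all [Finset.Nat.mem_antidiagonalTuple]
  · intro c _
    simp [Fin.prod_univ_castSucc, Fin.init]

theorem esymmF_succ_succ (k r : ℕ) :
    esymmF x (k + 1) (r + 1) = esymmF x k (r + 1) + x (k + 1) * esymmF x k r := by
  simp only [esymmF, ← Finset.esymm_map_val, Finset.range_val, Multiset.range_succ,
    Multiset.map_cons, Multiset.esymm, Multiset.powersetCard_cons, Multiset.map_add,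
    Multiset.sum_add, Multiset.map_map, Function.comp_def, Multiset.prod_cons,
    Multiset.sum_map_mul_left]

theorem esymmSeries_succ (k : ℕ) :
    esymmSeries x (k + 1) = esymmSeries x k * (1 - C (x (k + 1)) * X) := by
  ext (_ | r)
  · simp [esymmSeries, esymmF]
  · rw [coeff_succ_mul_one_sub_C_mul_X]
    simp only [esymmSeries, coeff_mk, esymmF_succ_succ, pow_succ]
    ring

theorem esymmSeries_mul_hsymmSeries (k : ℕ) : esymmSeries x k * hsymmSeries x k = 1 := by
  induction k with
  | zero => rw [esymmSeries_zero, hsymmSeries_zero, one_mul]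
  | succ k ih =>
    rw [esymmSeries_succ, hsymmSeries_succ, mul_mul_mul_comm, ih, mul_comm (1 - _),
      mk_pow_mul_one_sub_C_mul_X, one_mul]

theorem coeff_zero_esymmSeries_mul_hsymmSeries (N j : ℕ) :
    coeff 0 (esymmSeries x N * hsymmSeries x j) = 1 := by
  simp [coeff_mul, esymmSeries, hsymmSeries, esymmF, hsymmF,
    Finset.Nat.antidiagonalTuple_zero_right]

theorem coeff_esymmSeries_mul_hsymmSeries_eq_zero {j N r : ℕ} (hjN : j ≤ N) (hr : N - j < r) :
    coeff r (esymmSeries x N * hsymmSeries x j) = 0 := by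
  induction N, hjN using Nat.le_induction generalizing r with
  | base => rw [esymmSeries_mul_hsymmSeries, coeff_one, if_neg (by omega)]
  | succ N hjN ih =>
    obtain ⟨r, rfl⟩ := Nat.exists_eq_add_of_lt (by omega : 0 < r)
    rw [esymmSeries_succ, mul_right_comm, zero_add, coeff_succ_mul_one_sub_C_mul_X,
      ih (by omega), ih (by omega), mul_zero, sub_zero]

end SymmetricSeries

theorem sum_Hf_mul_Ef_eq_coeff (f : ℕ → ℝ) (j d : ℕ) :
    ∑ m ∈ Finset.range (j + d + 1), Hf f j m * ((-1 : ℝ) ^ (m + (j + d)) * Ef f m (j + d)) =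
      coeff d (esymmSeries f (j + d - 1) * hsymmSeries f j) := by
  rw [mul_comm, add_assoc, Finset.sum_range_add, Finset.sum_eq_zero fun m hm => by
    rw [Hf, if_pos (Finset.mem_range.mp hm), zero_mul], zero_add, coeff_mul,
    Finset.Nat.sum_antidiagonal_eq_sum_range_succ fun a b => coeff a _ * coeff b _]
  refine Finset.sum_congr rfl fun b hb => ?_
  have hbd : b ≤ d := Nat.lt_succ_iff.mp (Finset.mem_range.mp hb)
  have hsign : (-1 : ℝ) ^ (j + b + (j + d)) = (-1) ^ (d - b) := by
    rw [show j + b + (j + d) = d - b + 2 * (j + b) by omega, pow_add, pow_mul, neg_one_sq,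
      one_pow, mul_one]
  simp only [Hf, Ef, hsymmSeries, esymmSeries, coeff_mk, hsign, if_neg (by omega : ¬j + b < j),
    if_neg (by omega : ¬j + d < j + b), Nat.add_sub_cancel_left, Nat.add_sub_add_left]

/-- The matrices `H = (H_{j,n})` and `E = ((-1)^{j+n} E_{j,n})` are inverse to each
other: the `(j, n')` entry of their product is `δ_{j,n'}`.  (Only the terms with
`j ≤ m ≤ n'` contribute to the sum.) -/
theorem Hf_Ef_inverse (f : ℕ → ℝ) (j n' : ℕ) :
    ∑ m ∈ Finset.range (n' + 1), Hf f j m * ((-1 : ℝ) ^ (m + n') * Ef f m n') =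
      if j = n' then 1 else 0 := by
  rcases lt_or_ge n' j with hlt | hle
  · rw [if_neg hlt.ne']
    exact Finset.sum_eq_zero fun m hm => by
      rw [Hf, if_pos ((Finset.mem_range.mp hm).trans_le hlt), zero_mul]
  obtain ⟨d, rfl⟩ := Nat.exists_eq_add_of_le hle
  rw [sum_Hf_mul_Ef_eq_coeff]
  rcases d with _ | d
  · rw [coeff_zero_esymmSeries_mul_hsymmSeries, if_pos (add_zero j).symm]
  · rw [if_neg (by omega)]
    exact coeff_esymmSeries_mul_hsymmSeries_eq_zero f (by omega) (by omega)
end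

section
/- For integers t ≥ 1, n, k ≥ 1, define a_n^{(t)}(x_1,...,x_k) = ∑ x_{i_1}···x_{i_n} over all 1 ≤ i_1 < ··· < i_n ≤ k with i_j ≡ j (mod t) for all j. Then a_n^{(t)}(x_1,...,x_k) = a_n^{(t)}(x_1,...,x_{k-1}) if k ≢ n (mod t), and a_n^{(t)}(x_1,...,x_k) = ∑_{h≥0} x_k x_{k-1}···x_{k-h+1} · a_{n-h}^{(t)}(x_1,...,x_{k-h-1}) if k ≡ n (mod t). -/
/-!
An admissible index sequence for `x 1, …, x (k + 1)` either avoids `k + 1`, and is then an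
admissible sequence for `x 1, …, x k`, or ends with `k + 1`, and is then an admissible sequence
of length one less for `x 1, …, x k` followed by `k + 1`; the latter is possible only when
`k + 1 ≡ n + 1 (mod t)`. This is the first recurrence. In the second case `k ≡ n (mod t)` again,
so the second alternative can be unrolled, which gives the sum formula.
-/

/-- Brenti's generalized elementary symmetric function `a_n^{(t)}(x 1, …, x k)`:
the sum of products `x i₁ ⋯ x iₙ` over all `1 ≤ i₁ < ⋯ < iₙ ≤ k` with
`iⱼ ≡ j (mod t)` for all `j`; here `v : Fin n → ℕ` is the `0`-indexed sequence,
so `v m ≡ m + 1 (mod t)`.  `a_0^{(t)} = 1`. -/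
noncomputable def aFun (t : ℕ) (x : ℕ → ℝ) (k n : ℕ) : ℝ := by
  classical
  exact ∑ v ∈ (Fintype.piFinset fun _ : Fin n => Finset.Icc 1 k).filter
      (fun v : Fin n → ℕ =>
        StrictMono v ∧ ∀ m : Fin n, v m % t = ((m : ℕ) + 1) % t),
    ∏ m : Fin n, x (v m)

theorem Fin.strictMono_snoc_iff {α : Type*} [Preorder α] {n : ℕ} {w : Fin n → α} {a : α} :
    StrictMono (Fin.snoc w a : Fin (n + 1) → α) ↔ StrictMono w ∧ ∀ m, w m < a := by
  refine ⟨fun h => ⟨fun i j hij => ?_, fun m => ?_⟩, fun ⟨hw, ha⟩ i j hij => ?_⟩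
  · simpa using h (Fin.castSucc_lt_castSucc_iff.mpr hij)
  · simpa using h (Fin.castSucc_lt_last m)
  · obtain ⟨i, rfl⟩ := Fin.exists_castSucc_eq.mpr (Fin.ne_last_of_lt hij)
    obtain ⟨j, rfl⟩ | rfl := j.eq_castSucc_or_eq_last
    · simpa using hw (Fin.castSucc_lt_castSucc_iff.mp hij)
    · simpa using ha i

open Finset

open Classical in
noncomputable def admissibleSeqs (t k n : ℕ) : Finset (Fin n → ℕ) :=
  (Fintype.piFinset fun _ : Fin n => Icc 1 k).filter
    fun v => StrictMono v ∧ ∀ m : Fin n, v m % t = ((m : ℕ) + 1) % t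

section

variable {t k n : ℕ}

theorem aFun_eq_sum_admissibleSeqs (x : ℕ → ℝ) :
    aFun t x k n = ∑ v ∈ admissibleSeqs t k n, ∏ m, x (v m) := rfl

theorem mem_admissibleSeqs {v : Fin n → ℕ} :
    v ∈ admissibleSeqs t k n ↔
      (∀ m, 1 ≤ v m ∧ v m ≤ k) ∧ StrictMono v ∧ ∀ m : Fin n, v m % t = ((m : ℕ) + 1) % t := by
  simp [admissibleSeqs]

theorem snoc_mem_admissibleSeqs_iff {w : Fin n → ℕ} {a : ℕ} :
    Fin.snoc w a ∈ admissibleSeqs t k (n + 1) ↔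
      w ∈ admissibleSeqs t (a - 1) n ∧ 1 ≤ a ∧ a ≤ k ∧ a % t = (n + 1) % t := by
  simp only [mem_admissibleSeqs, Fin.forall_fin_succ', Fin.snoc_castSucc, Fin.snoc_last,
    Fin.strictMono_snoc_iff, Fin.val_castSucc, Fin.val_last]
  constructor
  · rintro ⟨⟨hwk, ha, hak⟩, ⟨hw, hwa⟩, hres, hares⟩
    exact ⟨⟨fun m => ⟨(hwk m).1, Nat.le_sub_one_of_lt (hwa m)⟩, hw, hres⟩, ha, hak, hares⟩
  · rintro ⟨⟨hwa, hw, hres⟩, ha, hak, hares⟩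
    have hwa' (m : Fin n) : w m < a := by have := hwa m; omega
    exact ⟨⟨fun m => ⟨(hwa m).1, (hwa' m).le.trans hak⟩, ha, hak⟩, ⟨hw, hwa'⟩, hres, hares⟩

theorem filter_last_ne_admissibleSeqs :
    (admissibleSeqs t (k + 1) (n + 1)).filter (fun v => v (Fin.last n) ≠ k + 1) =
      admissibleSeqs t k (n + 1) := by
  ext v
  rw [mem_filter, ← Fin.snoc_init_self v, snoc_mem_admissibleSeqs_iff, snoc_mem_admissibleSeqs_iff,
    Fin.snoc_last]
  grind

theorem mem_filter_last_eq_admissibleSeqs {v : Fin (n + 1) → ℕ} :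
    v ∈ (admissibleSeqs t (k + 1) (n + 1)).filter (fun v => v (Fin.last n) = k + 1) ↔
      v = Fin.snoc (Fin.init v) (k + 1) ∧ Fin.init v ∈ admissibleSeqs t k n ∧
        (k + 1) % t = (n + 1) % t := by
  conv_lhs => rw [mem_filter, ← Fin.snoc_init_self v, snoc_mem_admissibleSeqs_iff, Fin.snoc_last]
  constructor
  · rintro ⟨⟨hv, -, -, hres⟩, hlast⟩
    rw [hlast, Nat.add_sub_cancel] at hv
    rw [hlast] at hres
    exact ⟨by rw [← hlast, Fin.snoc_init_self], hv, hres⟩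
  · rintro ⟨hv, hinit, hres⟩
    have hlast : v (Fin.last n) = k + 1 := by rw [hv, Fin.snoc_last]
    rw [hlast, Nat.add_sub_cancel]
    exact ⟨⟨hinit, by omega, le_rfl, hres⟩, rfl⟩

theorem sum_filter_last_eq_admissibleSeqs (x : ℕ → ℝ) :
    ∑ v ∈ (admissibleSeqs t (k + 1) (n + 1)).filter (fun v => v (Fin.last n) = k + 1),
        ∏ m, x (v m) =
      if (k + 1) % t = (n + 1) % t then x (k + 1) * aFun t x k n else 0 := by
  split_ifs with hres
  · rw [aFun_eq_sum_admissibleSeqs, mul_sum]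
    refine sum_nbij' Fin.init (Fin.snoc · (k + 1)) (fun v hv => ?_) (fun w hw => ?_)
      (fun v hv => ?_) (fun w _ => Fin.init_snoc _ _) (fun v hv => ?_)
    · exact (mem_filter_last_eq_admissibleSeqs.mp hv).2.1
    · rw [mem_filter_last_eq_admissibleSeqs, Fin.init_snoc]
      exact ⟨rfl, hw, hres⟩
    · exact (mem_filter_last_eq_admissibleSeqs.mp hv).1.symm
    · rw [(mem_filter_last_eq_admissibleSeqs.mp hv).1, Fin.prod_univ_castSucc]
      simp only [Fin.snoc_castSucc, Fin.snoc_last, Fin.init_snoc, mul_comm]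
  · exact sum_eq_zero fun v hv => (hres (mem_filter_last_eq_admissibleSeqs.mp hv).2.2).elim

theorem aFun_succ_succ (x : ℕ → ℝ) :
    aFun t x (k + 1) (n + 1) =
      aFun t x k (n + 1) + if (k + 1) % t = (n + 1) % t then x (k + 1) * aFun t x k n else 0 := by
  rw [aFun_eq_sum_admissibleSeqs,
    ← sum_filter_not_add_sum_filter _ (fun v => v (Fin.last n) = k + 1),
    sum_filter_last_eq_admissibleSeqs, filter_last_ne_admissibleSeqs]
  rfl

theorem aFun_zero (x : ℕ → ℝ) : aFun t x k 0 = 1 := by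
  simp [aFun_eq_sum_admissibleSeqs, admissibleSeqs, StrictMono]

theorem aFun_eq_sum_prod_Ioc_mul (x : ℕ → ℝ) (hkn : k % t = n % t) :
    aFun t x k n = ∑ h ∈ range (min n k + 1),
      (∏ i ∈ Ioc (k - h) k, x i) * aFun t x (k - h - 1) (n - h) := by
  induction n generalizing k with
  | zero => simp [aFun_zero]
  | succ n ih =>
    rcases k with _ | k
    · simp
    have hkn' : k % t = n % t := Nat.ModEq.add_right_cancel' 1 hkn
    rw [aFun_succ_succ, if_pos hkn, Nat.add_min_add_right, sum_range_succ', ih hkn', mul_sum,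
      add_comm]
    congr 1
    · refine sum_congr rfl fun i _ => ?_
      rw [Nat.add_sub_add_right, Nat.add_sub_add_right, prod_Ioc_succ_top (Nat.sub_le k i)]
      ring
    · simp

end

theorem aFun_recurrence_general (t : ℕ) (x : ℕ → ℝ) (n k : ℕ) :
    (k % t ≠ n % t → aFun t x k n = aFun t x (k - 1) n) ∧
    (k % t = n % t →
      aFun t x k n =
        ∑ h ∈ Finset.range (min n k + 1),
          (∏ i ∈ Finset.Ioc (k - h) k, x i) * aFun t x (k - h - 1) (n - h)) := by
  refine ⟨fun hne => ?_, aFun_eq_sum_prod_Ioc_mul x⟩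
  rcases n with _ | n
  · rw [aFun_zero, aFun_zero]
  rcases k with _ | k
  · rfl
  rw [aFun_succ_succ, if_neg hne, add_zero, Nat.add_sub_cancel]

theorem aFun_recurrence (t : ℕ) (ht : 1 ≤ t) (x : ℕ → ℝ) (n k : ℕ)
    (hn : 1 ≤ n) (hk : 1 ≤ k) :
    (k % t ≠ n % t → aFun t x k n = aFun t x (k - 1) n) ∧
    (k % t = n % t →
      aFun t x k n =
        ∑ h ∈ Finset.range (min n k + 1),
          (∏ i ∈ Finset.Ioc (k - h) k, x i) * aFun t x (k - h - 1) (n - h)) :=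
  aFun_recurrence_general t x n k
end
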